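/- Suppose |n⃗| = |m⃗|, F_{n⃗} is an |n⃗|-dimensional subspace of L²(ℝ), and F_{n⃗} ∩ G_{m⃗}⊥ = {0}. Then for every k = 1,…,p, the space F_{n⃗+e⃗ₖ} ∩ G_{m⃗}⊥ is one-dimensional, and for every nonzero Q = Σⱼ Aⱼ w₁ⱼ in this space the polynomial Aₖ has exact degree nₖ. -/

import Mathlib

/-!
Inside the (|n⃗|+1)-dimensional space F_{n⃗+e⃗ₖ}, membership in G_{m⃗}⊥ amounts to |m⃗| = |n⃗|
linear moment conditions, so F_{n⃗+e⃗ₖ} ∩ G_{m⃗}⊥ has dimension at least one. It meets the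
codimension-one subspace F_{n⃗} trivially, so its dimension is at most one. If a nonzero
Q = Σ Aⱼ w₁ⱼ in it had deg Aₖ < nₖ, then Q ∈ F_{n⃗} ∩ G_{m⃗}⊥ = {0}; but the functions xʲ w₁ₗ
spanning F_{n⃗+e⃗ₖ} are linearly independent by the dimension count, so Q = 0 forces every Aⱼ = 0.
-/

open MeasureTheory Polynomial

/-- The space F_{n⃗}: the span in functions on ℝ of xʲ·w₁ₗ(x), 0 ≤ j ≤ nₗ−1. -/
noncomputable def mixedF {p : ℕ} (w1 : Fin p → ℝ → ℝ) (n : Fin p → ℕ) :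
    Submodule ℝ (ℝ → ℝ) :=
  Submodule.span ℝ {f | ∃ l : Fin p, ∃ j : ℕ, j < n l ∧ f = fun x => x ^ j * w1 l x}

/-- The "orthogonal complement of G_{m⃗}": functions Q such that Q·xʲ·w₂ₖ is
integrable with vanishing integral for 0 ≤ j ≤ mₖ−1, k = 1,…,q. -/
noncomputable def mixedGperp {q : ℕ} (w2 : Fin q → ℝ → ℝ) (m : Fin q → ℕ) :
    Submodule ℝ (ℝ → ℝ) where
  carrier := {Q | ∀ k : Fin q, ∀ j, j < m k →
    Integrable (fun x => Q x * (x ^ j * w2 k x)) ∧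
      (∫ x, Q x * (x ^ j * w2 k x)) = 0}
  zero_mem' := by
    intro k j hj
    constructor
    · simpa using (integrable_zero ℝ ℝ (volume : Measure ℝ))
    · simp
  add_mem' := by
    intro a b ha hb k j hj
    obtain ⟨hai, haz⟩ := ha k j hj
    obtain ⟨hbi, hbz⟩ := hb k j hj
    constructor
    · simp only [Pi.add_apply, add_mul]; exact hai.add hbi
    · have h : (fun x => (a + b) x * (x ^ j * w2 k x)) =
        fun x => a x * (x ^ j * w2 k x) + b x * (x ^ j * w2 k x) := by
        funext x; simp [add_mul]
      rw [h, integral_add hai hbi, haz, hbz, add_zero]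
  smul_mem' := by
    intro c a ha k j hj
    obtain ⟨hai, haz⟩ := ha k j hj
    have h : (fun x => (c • a) x * (x ^ j * w2 k x)) =
        fun x => c * (a x * (x ^ j * w2 k x)) := by
      funext x; simp [mul_assoc]
    constructor
    · rw [h]; exact hai.const_mul c
    · rw [h, integral_const_mul, haz, mul_zero]

/-- Q is a linear form of multiple orthogonal polynomials of mixed type for the
pair (n⃗, m⃗). -/
noncomputable def IsMixedForm {p q : ℕ} (w1 : Fin p → ℝ → ℝ) (w2 : Fin q → ℝ → ℝ)
    (n : Fin p → ℕ) (m : Fin q → ℕ) (Q : ℝ → ℝ) : Prop :=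
  (∃ A : Fin p → Polynomial ℝ, (∀ i, (A i).degree < (n i : ℕ)) ∧
     Q = fun x => ∑ i, (A i).eval x * w1 i x) ∧
  ∀ k : Fin q, ∀ j, j < m k → (∫ x, Q x * (x ^ j * w2 k x)) = 0

open Module

theorem Polynomial.eval_eq_sum_range_of_degree_lt {R : Type*} [Semiring R] {P : R[X]} {n : ℕ}
    (h : P.degree < n) (x : R) : P.eval x = ∑ i ∈ Finset.range n, P.coeff i * x ^ i := by
  rcases eq_or_ne P 0 with rfl | hP
  · simp
  · exact eval_eq_sum_range' ((natDegree_lt_iff_degree_lt hP).2 h) x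

theorem Submodule.finrank_add_finrank_le_of_disjoint_of_le {K V : Type*} [DivisionRing K]
    [AddCommGroup V] [Module K V] {s t u : Submodule K V} [FiniteDimensional K u]
    (hs : s ≤ u) (ht : t ≤ u) (hst : Disjoint s t) :
    finrank K s + finrank K t ≤ finrank K u := by
  have := Submodule.finiteDimensional_of_le hs
  have := Submodule.finiteDimensional_of_le ht
  rw [← Submodule.finrank_sup_add_finrank_inf_eq, hst.eq_bot, finrank_bot, add_zero]
  exact Submodule.finrank_mono (sup_le hs ht)

section Moments

variable {α ι : Type*} [MeasurableSpace α] {μ : Measure α}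

theorem integrable_mul_of_mem_span {s : Set (α → ℝ)} {g : α → ℝ}
    (hs : ∀ f ∈ s, Integrable (fun x => f x * g x) μ) {f : α → ℝ}
    (hf : f ∈ Submodule.span ℝ s) : Integrable (fun x => f x * g x) μ := by
  induction hf using Submodule.span_induction with
  | mem f hf => exact hs f hf
  | zero => simp
  | add f f' _ _ hf hf' =>
    simp only [Pi.add_apply, add_mul]
    exact hf.add hf'
  | smul c f _ hf => simpa [mul_assoc] using hf.const_mul c

theorem exists_ne_zero_mem_forall_integral_mul_eq_zero [Fintype ι] (V : Submodule ℝ (α → ℝ))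
    [FiniteDimensional ℝ V] (g : ι → α → ℝ)
    (hint : ∀ f ∈ V, ∀ i, Integrable (fun x => f x * g i x) μ)
    (hcard : Fintype.card ι < finrank ℝ V) :
    ∃ f ∈ V, f ≠ 0 ∧ ∀ i, ∫ x, f x * g i x ∂μ = 0 := by
  let moments : V →ₗ[ℝ] ι → ℝ :=
    { toFun := fun f i => ∫ x, (f : α → ℝ) x * g i x ∂μ
      map_add' := fun f f' => funext fun i => by
        simpa [add_mul] using integral_add (hint f f.2 i) (hint f' f'.2 i)
      map_smul' := fun c f => funext fun i => by
        simpa [mul_assoc] using integral_const_mul c _ }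
  have hker : LinearMap.ker moments ≠ ⊥ :=
    LinearMap.ker_ne_bot_of_finrank_lt (by rwa [finrank_fintype_fun_eq_card])
  obtain ⟨f, hf, hf0⟩ := Submodule.exists_mem_ne_zero_of_ne_bot hker
  exact ⟨f, f.2, fun h => hf0 (Subtype.ext h), fun i => congrFun hf i⟩

end Moments

section Mixed

variable {p q : ℕ} (w1 : Fin p → ℝ → ℝ) (w2 : Fin q → ℝ → ℝ)

noncomputable def mixedFamily (n : Fin p → ℕ) : (Σ l : Fin p, Fin (n l)) → ℝ → ℝ :=
  fun s x => x ^ (s.2 : ℕ) * w1 s.1 x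

theorem mixedF_eq_span_range (n : Fin p → ℕ) :
    mixedF w1 n = Submodule.span ℝ (Set.range (mixedFamily w1 n)) := by
  unfold mixedF
  congr 1
  ext f
  constructor
  · rintro ⟨l, j, hj, rfl⟩
    exact ⟨⟨l, j, hj⟩, rfl⟩
  · rintro ⟨⟨l, j⟩, rfl⟩
    exact ⟨l, j, j.isLt, rfl⟩

theorem mixedF_mono {n n' : Fin p → ℕ} (h : n ≤ n') : mixedF w1 n ≤ mixedF w1 n' := by
  refine Submodule.span_mono ?_
  rintro _ ⟨l, j, hj, rfl⟩
  exact ⟨l, j, hj.trans_le (h l), rfl⟩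

theorem linearIndependent_mixedFamily {n : Fin p → ℕ}
    (h : finrank ℝ (mixedF w1 n) = ∑ i, n i) : LinearIndependent ℝ (mixedFamily w1 n) := by
  rw [linearIndependent_iff_card_eq_finrank_span, Set.finrank, ← mixedF_eq_span_range, h]
  simp [Fintype.card_sigma]

theorem sum_eval_mul_eq_sum_coeff_smul {n : Fin p → ℕ} {A : Fin p → ℝ[X]}
    (hA : ∀ i, (A i).degree < n i) :
    (fun x => ∑ i, (A i).eval x * w1 i x) =
      ∑ s : Σ l : Fin p, Fin (n l), (A s.1).coeff s.2 • mixedFamily w1 n s := by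
  funext x
  simp only [Finset.sum_apply, Pi.smul_apply, smul_eq_mul, mixedFamily]
  rw [← Finset.univ_sigma_univ, Finset.sum_sigma]
  refine Finset.sum_congr rfl fun l _ => ?_
  rw [eval_eq_sum_range_of_degree_lt (hA l), Finset.sum_mul, ← Fin.sum_univ_eq_sum_range]
  simp only [mul_assoc]

theorem sum_eval_mul_mem_mixedF {n : Fin p → ℕ} {A : Fin p → ℝ[X]}
    (hA : ∀ i, (A i).degree < n i) : (fun x => ∑ i, (A i).eval x * w1 i x) ∈ mixedF w1 n := by
  rw [sum_eval_mul_eq_sum_coeff_smul w1 hA, mixedF_eq_span_range]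
  exact Submodule.sum_mem _ fun s _ =>
    Submodule.smul_mem _ _ (Submodule.subset_span (Set.mem_range_self s))

theorem eq_zero_of_sum_eval_mul_eq_zero {n : Fin p → ℕ}
    (hli : LinearIndependent ℝ (mixedFamily w1 n)) {A : Fin p → ℝ[X]}
    (hA : ∀ i, (A i).degree < n i) (h : (fun x => ∑ i, (A i).eval x * w1 i x) = 0) : A = 0 := by
  rw [sum_eval_mul_eq_sum_coeff_smul w1 hA] at h
  have hcoeff := Fintype.linearIndependent_iff.1 hli _ h
  funext i
  ext j
  rw [Pi.zero_apply, coeff_zero]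
  by_cases hj : j < n i
  · exact hcoeff ⟨i, j, hj⟩
  · exact coeff_eq_zero_of_degree_lt ((hA i).trans_le (by exact_mod_cast not_lt.1 hj))

theorem mixedF_inf_mixedGperp_ne_bot {n : Fin p → ℕ} {m : Fin q → ℕ}
    [FiniteDimensional ℝ (mixedF w1 n)]
    (hInt : ∀ (l : Fin p) (j : ℕ), j < n l → ∀ (k : Fin q) (i : ℕ), i < m k →
      Integrable (fun x : ℝ => (x ^ j * w1 l x) * (x ^ i * w2 k x)))
    (hm : ∑ k, m k < finrank ℝ (mixedF w1 n)) : mixedF w1 n ⊓ mixedGperp w2 m ≠ ⊥ := by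
  have hint : ∀ f ∈ mixedF w1 n, ∀ s, Integrable (fun x => f x * mixedFamily w2 m s x) := by
    intro f hf s
    refine integrable_mul_of_mem_span ?_ hf
    rintro _ ⟨l, j, hj, rfl⟩
    exact hInt l j hj s.1 s.2 s.2.isLt
  obtain ⟨f, hf, hf0, hmoments⟩ := exists_ne_zero_mem_forall_integral_mul_eq_zero
    (mixedF w1 n) (mixedFamily w2 m) hint (by simpa [Fintype.card_sigma] using hm)
  intro hbot
  have hfG : f ∈ mixedGperp w2 m := fun k j hj => ⟨hint f hf ⟨k, j, hj⟩, hmoments ⟨k, j, hj⟩⟩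
  exact hf0 ((Submodule.mem_bot ℝ).1 (hbot ▸ ⟨hf, hfG⟩))

theorem degree_eq_of_sum_eval_mul_mem_mixedGperp {n : Fin p → ℕ} {m : Fin q → ℕ} {k : Fin p}
    (hli : LinearIndependent ℝ (mixedFamily w1 (Function.update n k (n k + 1))))
    (hbot : mixedF w1 n ⊓ mixedGperp w2 m = ⊥) {A : Fin p → ℝ[X]}
    (hA : ∀ i, (A i).degree < (Function.update n k (n k + 1) i : ℕ))
    (hQ : (fun x => ∑ i, (A i).eval x * w1 i x) ∈ mixedGperp w2 m) (hA0 : A ≠ 0) :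
    (A k).degree = n k := by
  by_contra hdeg
  have hAn : ∀ i, (A i).degree < n i := by
    intro i
    rcases eq_or_ne i k with rfl | hi
    · have hlt : (A i).degree < (n i + 1 : ℕ) := by simpa using hA i
      exact (Order.le_of_lt_succ hlt).lt_of_ne hdeg
    · simpa [Function.update_of_ne hi] using hA i
  have hQ0 : (fun x => ∑ i, (A i).eval x * w1 i x) = 0 :=
    (Submodule.mem_bot ℝ).1 (hbot ▸ ⟨sum_eval_mul_mem_mixedF w1 hAn, hQ⟩)
  exact hA0 (eq_zero_of_sum_eval_mul_eq_zero w1 hli hA hQ0)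

end Mixed

/-- Corollary 2.3(b): if |n⃗| = |m⃗|, F_{n⃗} is |n⃗|-dimensional,
F_{n⃗+e⃗ₖ} is (|n⃗|+1)-dimensional and F_{n⃗} ∩ G_{m⃗}⊥ = {0}, then
F_{n⃗+e⃗ₖ} ∩ G_{m⃗}⊥ is one-dimensional and for every nonzero Q = Σⱼ Aⱼ w₁ⱼ in
it, Aₖ has exact degree nₖ (type II normalization is possible). -/
theorem stmt13 (p q : ℕ) (w1 : Fin p → ℝ → ℝ) (w2 : Fin q → ℝ → ℝ)
    (n : Fin p → ℕ) (m : Fin q → ℕ) (k : Fin p)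
    (hInt : ∀ (l : Fin p) (j : ℕ), j < Function.update n k (n k + 1) l →
      ∀ (k' : Fin q) (i : ℕ), i < m k' →
      Integrable (fun x : ℝ => (x ^ j * w1 l x) * (x ^ i * w2 k' x)))
    (hdim : Module.finrank ℝ (mixedF w1 n) = ∑ i, n i)
    (hdim' : Module.finrank ℝ (mixedF w1 (Function.update n k (n k + 1))) = ∑ i, n i + 1)
    (hnm : ∑ i, n i = ∑ k', m k')
    (hbot : mixedF w1 n ⊓ mixedGperp w2 m = ⊥) :
    Module.finrank ℝ
      (mixedF w1 (Function.update n k (n k + 1)) ⊓ mixedGperp w2 m :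
        Submodule ℝ (ℝ → ℝ)) = 1 ∧
    ∀ A : Fin p → Polynomial ℝ,
      (∀ i, (A i).degree < (Function.update n k (n k + 1) i : ℕ)) →
      (fun x => ∑ i, (A i).eval x * w1 i x) ∈ mixedGperp w2 m →
      (¬ ∀ i, A i = 0) →
      (A k).degree = ((n k : ℕ) : WithBot ℕ) := by
  set n' := Function.update n k (n k + 1)
  have hle : n ≤ n' := fun i => by
    rcases eq_or_ne i k with rfl | hi
    · simp [n']
    · simp [n', Function.update_of_ne hi]
  have hsum : ∑ i, n' i = ∑ i, n i + 1 := by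
    rw [Finset.sum_update_of_mem (Finset.mem_univ k),
      Finset.sum_eq_sum_sdiff_singleton_add (Finset.mem_univ k) n]
    omega
  have : FiniteDimensional ℝ (mixedF w1 n') := Module.finite_of_finrank_eq_succ hdim'
  have hdisj : Disjoint (mixedF w1 n) (mixedF w1 n' ⊓ mixedGperp w2 m) :=
    disjoint_iff.2 (le_bot_iff.1 (hbot ▸ inf_le_inf_left _ inf_le_right))
  refine ⟨le_antisymm ?_ ?_, fun A hA hQ hA0 => degree_eq_of_sum_eval_mul_mem_mixedGperp w1 w2
    (linearIndependent_mixedFamily w1 (hdim'.trans hsum.symm)) hbot hA hQ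
    fun h => hA0 (congrFun h)⟩
  · have := Submodule.finrank_add_finrank_le_of_disjoint_of_le (mixedF_mono w1 hle)
      inf_le_left hdisj
    rw [hdim, hdim'] at this
    omega
  · have := Submodule.finiteDimensional_of_le
      (inf_le_left : mixedF w1 n' ⊓ mixedGperp w2 m ≤ _)
    exact Submodule.one_le_finrank_iff.2 (mixedF_inf_mixedGperp_ne_bot w1 w2 hInt
      (by rw [hdim', ← hnm]; omega))
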